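/- For every real x > 0, ∫_0^{π/2} cos ϑ · I_0(x·cos ϑ) dϑ = sinh(x)/x, where I_0(y) = ∑_{m=0}^∞ 1/(m!·Γ(m+1))·(y/2)^{2m}. -/

import Mathlib

open Real MeasureTheory

/-- The modified Bessel function of the first kind of order 0, defined by its series. -/
noncomputable def besselI0 (y : ℝ) : ℝ :=
  ∑' m : ℕ, 1 / (m.factorial * Real.Gamma (m + 1)) * (y / 2) ^ (2 * m)

/-! Expand `cos ϑ · I₀(x cos ϑ)` as the power series `∑ (x/2)^{2m} cos^{2m+1} ϑ / (m!)²`, whose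
terms are bounded by the (summable) series of `I₀(x)` itself, so it can be integrated termwise.
Wallis' formula `∫₀^{π/2} cos^{2m+1} = 4^m (m!)² / (2m+1)!` turns the result into
`∑ x^{2m} / (2m+1)! = sinh x / x`. -/

theorem hasSum_intervalIntegral_of_norm_le_summable {ι E : Type*} [Countable ι]
    [NormedAddCommGroup E] [NormedSpace ℝ E] {F : ι → ℝ → E} {f : ℝ → E} {C : ι → ℝ}
    {a b : ℝ} (hF : ∀ n, Continuous (F n)) (hFC : ∀ n t, ‖F n t‖ ≤ C n) (hC : Summable C)
    (hf : ∀ t, HasSum (fun n ↦ F n t) (f t)) :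
    HasSum (fun n ↦ ∫ t in a..b, F n t) (∫ t in a..b, f t) :=
  intervalIntegral.hasSum_integral_of_dominated_convergence (fun n _ ↦ C n)
    (fun n ↦ (hF n).aestronglyMeasurable) (fun n ↦ .of_forall fun t _ ↦ hFC n t)
    (.of_forall fun _ _ ↦ hC) intervalIntegrable_const (.of_forall fun t _ ↦ hf t)

theorem integral_cos_pow_two_mul_add_one (n : ℕ) :
    ∫ θ in (0:ℝ)..(π / 2), cos θ ^ (2 * n + 1)
      = 2 ^ (2 * n) * (n.factorial : ℝ) ^ 2 / (2 * n + 1).factorial := by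
  induction n with
  | zero => simp
  | succ n ih =>
    rw [show 2 * (n + 1) + 1 = 2 * n + 1 + 2 by ring, integral_cos_pow, ih]
    simp only [cos_pi_div_two, sin_zero]
    push_cast [Nat.factorial_succ, show 2 * n + 1 + 2 = 2 * n + 2 + 1 by ring]
    field_simp
    ring

theorem hasSum_pow_two_mul_div_factorial {x : ℝ} (hx : x ≠ 0) :
    HasSum (fun n ↦ x ^ (2 * n) / (2 * n + 1).factorial) (sinh x / x) := by
  simpa only [pow_succ, mul_div_right_comm, mul_div_cancel_right₀ _ hx] using
    (hasSum_sinh x).div_const x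

theorem besselI0_term_nonneg (y : ℝ) (m : ℕ) :
    0 ≤ (y / 2) ^ (2 * m) / (m.factorial : ℝ) ^ 2 :=
  div_nonneg ((even_two_mul m).pow_nonneg _) (by positivity)

theorem besselI0_term_le (y : ℝ) (m : ℕ) :
    (y / 2) ^ (2 * m) / (m.factorial : ℝ) ^ 2 ≤ (y ^ 2 / 4) ^ m / m.factorial :=
  calc (y / 2) ^ (2 * m) / (m.factorial : ℝ) ^ 2
      = (y ^ 2 / 4) ^ m / m.factorial / m.factorial := by rw [pow_mul]; ring
    _ ≤ (y ^ 2 / 4) ^ m / m.factorial :=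
      div_le_self (by positivity) (by exact_mod_cast m.factorial_pos)

theorem hasSum_besselI0 (y : ℝ) :
    HasSum (fun m : ℕ ↦ (y / 2) ^ (2 * m) / (m.factorial : ℝ) ^ 2) (besselI0 y) := by
  have hsum : Summable fun m : ℕ ↦ (y / 2) ^ (2 * m) / (m.factorial : ℝ) ^ 2 :=
    .of_nonneg_of_le (besselI0_term_nonneg y) (besselI0_term_le y) (summable_pow_div_factorial _)
  convert hsum.hasSum using 1
  unfold besselI0
  congr 1 with m
  rw [Gamma_nat_eq_factorial]
  ring

theorem cos_mul_besselI0_term (x θ : ℝ) (m : ℕ) :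
    cos θ * ((x * cos θ / 2) ^ (2 * m) / (m.factorial : ℝ) ^ 2)
      = (x / 2) ^ (2 * m) / (m.factorial : ℝ) ^ 2 * cos θ ^ (2 * m + 1) := by
  ring

theorem norm_cos_mul_besselI0_term_le (x : ℝ) (m : ℕ) (θ : ℝ) :
    ‖cos θ * ((x * cos θ / 2) ^ (2 * m) / (m.factorial : ℝ) ^ 2)‖
      ≤ (x / 2) ^ (2 * m) / (m.factorial : ℝ) ^ 2 := by
  have hcoef := besselI0_term_nonneg x m
  rw [cos_mul_besselI0_term, norm_mul, Real.norm_of_nonneg hcoef, norm_pow, Real.norm_eq_abs]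
  exact mul_le_of_le_one_right hcoef (pow_le_one₀ (abs_nonneg _) (abs_cos_le_one θ))

theorem integral_cos_mul_besselI0_term (x : ℝ) (m : ℕ) :
    ∫ θ in (0:ℝ)..(π / 2), cos θ * ((x * cos θ / 2) ^ (2 * m) / (m.factorial : ℝ) ^ 2)
      = x ^ (2 * m) / (2 * m + 1).factorial := by
  simp only [cos_mul_besselI0_term, intervalIntegral.integral_const_mul,
    integral_cos_pow_two_mul_add_one]
  rw [div_pow]
  field_simp

theorem integral_cos_besselI0 (x : ℝ) (hx : 0 < x) :
    ∫ ϑ in (0:ℝ)..(π / 2), Real.cos ϑ * besselI0 (x * Real.cos ϑ)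
      = Real.sinh x / x := by
  have hseries := hasSum_intervalIntegral_of_norm_le_summable (a := 0) (b := π / 2)
    (fun m ↦ by fun_prop) (norm_cos_mul_besselI0_term_le x) (hasSum_besselI0 x).summable
    (fun θ ↦ (hasSum_besselI0 (x * cos θ)).mul_left (cos θ))
  simp only [integral_cos_mul_besselI0_term] at hseries
  exact hseries.unique (hasSum_pow_two_mul_div_factorial hx.ne')
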